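/- arXiv:1912.06069 — 3 statements merged into one kernel-verified Lean document; each statement's English description precedes it below -/
import Mathlib

section
/- Let X be a compact metric space, φ: X → X a homeomorphism, F: X → ℝ continuous and β ∈ ℝ. If m is a φ-ergodic e^{βF}-conformal measure, then for m-almost every x ∈ X one has limsup_{k→∞} (1/k)·∑_{i=0}^{k-1} β·F(φ^i(x)) ≤ 0 and limsup_{k→∞} (1/k)·∑_{i=1}^{k} (−β·F(φ^{-i}(x))) ≤ 0. -/
open MeasureTheory Filter Topology
open scoped ENNReal

/-- A Borel probability measure `m` is `e^{βF}`-conformal for the homeomorphism `φ` if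
`∫ f dm = ∫ (f ∘ φ) e^{βF} dm` for every continuous `f : X → ℝ`. -/
def IsConformalMeasure {X : Type*} [TopologicalSpace X] [MeasurableSpace X]
    (φ : X ≃ₜ X) (F : X → ℝ) (β : ℝ) (m : Measure X) : Prop :=
  IsProbabilityMeasure m ∧
    ∀ f : X → ℝ, Continuous f →
      ∫ x, f x ∂m = ∫ x, f (φ x) * Real.exp (β * F x) ∂m

/-- A measure `m` is `φ`-ergodic if every Borel set `B` with `φ⁻¹(B) = B` satisfies
`m(B) = 0` or `m(X \ B) = 0`. -/
def IsErgodicMeasure {X : Type*} [TopologicalSpace X] [MeasurableSpace X]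
    (φ : X ≃ₜ X) (m : Measure X) : Prop :=
  ∀ B : Set X, MeasurableSet B → (φ : X → X) ⁻¹' B = B → m B = 0 ∨ m Bᶜ = 0

/-- If `∫ exp (T k) dm = 1` for all `k` and `|T k x| ≤ k * C`, then almost everywhere
`limsup (1/k) * T k ≤ 0`. -/
lemma aux_limsup {X : Type*} [MeasurableSpace X] (m : Measure X) [IsProbabilityMeasure m]
    (T : ℕ → X → ℝ) (hmeas : ∀ k, Measurable (T k))
    (C : ℝ) (hC0 : 0 ≤ C) (hC : ∀ k x, |T k x| ≤ k * C)
    (hint : ∀ k, ∫ x, Real.exp (T k x) ∂m = 1) :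
    ∀ᵐ x ∂m, limsup (fun k : ℕ => (1 / (k : ℝ)) * T k x) atTop ≤ 0 := by
  have hbdd : ∀ (x : X) (k : ℕ), -C ≤ (1 / (k : ℝ)) * T k x := by
    intro x k
    rcases Nat.eq_zero_or_pos k with rfl | hk
    · simpa using neg_nonpos.2 hC0
    · have hkpos : (0:ℝ) < k := by exact_mod_cast hk
      have h1 := (abs_le.1 (hC k x)).1
      calc -C = (1 / (k:ℝ)) * (-((k:ℝ) * C)) := by field_simp
        _ ≤ (1 / (k:ℝ)) * T k x := mul_le_mul_of_nonneg_left h1 (by positivity)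
  have key : ∀ ε : ℝ, 0 < ε → ∀ᵐ x ∂m,
      limsup (fun k : ℕ => (1 / (k : ℝ)) * T k x) atTop ≤ ε := by
    intro ε hε
    set s : ℕ → Set X := fun k => {x | (k : ℝ) * ε ≤ T k x} with hs
    have hmsk : ∀ k, m (s k) ≤ ENNReal.ofReal (Real.exp (-ε)) ^ k := by
      intro k
      have hfmeas : AEMeasurable (fun x => ENNReal.ofReal (Real.exp (T k x))) m :=
        (ENNReal.measurable_ofReal.comp (Real.measurable_exp.comp (hmeas k))).aemeasurable
      have hεne : ENNReal.ofReal (Real.exp ((k:ℝ) * ε)) ≠ 0 := by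
        simp [ENNReal.ofReal_eq_zero, not_le, Real.exp_pos]
      have hεnt : ENNReal.ofReal (Real.exp ((k:ℝ) * ε)) ≠ ⊤ := ENNReal.ofReal_ne_top
      have hsub : s k ⊆ {x | ENNReal.ofReal (Real.exp ((k:ℝ) * ε)) ≤
          ENNReal.ofReal (Real.exp (T k x))} := by
        intro x hx
        exact ENNReal.ofReal_le_ofReal (Real.exp_le_exp.2 hx)
      have hintk : ∫⁻ x, ENNReal.ofReal (Real.exp (T k x)) ∂m = 1 := by
        have hint' : Integrable (fun x => Real.exp (T k x)) m := by
          refine (integrable_const (Real.exp ((k:ℝ) * C))).mono'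
            ((Real.continuous_exp.measurable.comp (hmeas k)).aestronglyMeasurable) ?_
          filter_upwards with x
          rw [Real.norm_eq_abs, abs_of_pos (Real.exp_pos _)]
          exact Real.exp_le_exp.2 ((abs_le.1 (hC k x)).2)
        rw [← ofReal_integral_eq_lintegral_ofReal hint'
          (Filter.Eventually.of_forall fun x => (Real.exp_pos _).le), hint k]
        simp
      calc m (s k) ≤ m {x | ENNReal.ofReal (Real.exp ((k:ℝ) * ε)) ≤
            ENNReal.ofReal (Real.exp (T k x))} := measure_mono hsub
        _ ≤ (∫⁻ x, ENNReal.ofReal (Real.exp (T k x)) ∂m) /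
            ENNReal.ofReal (Real.exp ((k:ℝ) * ε)) :=
          meas_ge_le_lintegral_div hfmeas hεne hεnt
        _ = ENNReal.ofReal (Real.exp (-ε)) ^ k := by
          rw [hintk, ENNReal.div_eq_inv_mul, mul_one,
            ← ENNReal.ofReal_inv_of_pos (Real.exp_pos _), ← Real.exp_neg,
            neg_mul_eq_mul_neg, Real.exp_nat_mul,
            ENNReal.ofReal_pow (Real.exp_pos _).le]
    have htsum : (∑' k, m (s k)) ≠ ⊤ := by
      have hlt : ENNReal.ofReal (Real.exp (-ε)) < 1 := by
        exact ENNReal.ofReal_lt_one.2 (Real.exp_lt_one_iff.2 (neg_lt_zero.2 hε))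
      refine ne_top_of_le_ne_top ?_ (ENNReal.tsum_le_tsum hmsk)
      rw [ENNReal.tsum_geometric]
      simp only [ne_eq, ENNReal.inv_eq_top, tsub_eq_zero_iff_le, not_le]
      exact hlt
    filter_upwards [ae_eventually_notMem htsum] with x hx
    have hev : ∀ᶠ k : ℕ in atTop, (1 / (k : ℝ)) * T k x ≤ ε := by
      filter_upwards [hx, eventually_ge_atTop 1] with k hk hk1
      have hkpos : (0:ℝ) < k := by exact_mod_cast hk1
      have hTk : T k x < (k : ℝ) * ε := lt_of_not_ge hk
      calc (1 / (k : ℝ)) * T k x ≤ (1 / (k : ℝ)) * ((k:ℝ) * ε) :=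
            mul_le_mul_of_nonneg_left hTk.le (by positivity)
        _ = ε := by field_simp
    have hb : IsBoundedUnder (· ≥ ·) atTop (fun k : ℕ => (1 / (k : ℝ)) * T k x) :=
      isBoundedUnder_of ⟨-C, fun k => hbdd x k⟩
    exact limsup_le_of_le hb.isCoboundedUnder_le hev
  have h := fun n : ℕ => key (1 / ((n : ℝ) + 1)) (by positivity)
  rw [← ae_all_iff] at h
  filter_upwards [h] with x hx
  exact ge_of_tendsto' tendsto_one_div_add_atTop_nhds_zero_nat fun n => hx n

theorem stmt2 {X : Type*} [MetricSpace X] [CompactSpace X]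
    [MeasurableSpace X] [BorelSpace X]
    (φ : X ≃ₜ X) (F : X → ℝ) (hF : Continuous F) (β : ℝ)
    (m : Measure X) (hconf : IsConformalMeasure φ F β m) (herg : IsErgodicMeasure φ m) :
    ∀ᵐ x ∂m,
      limsup (fun k : ℕ =>
          (1 / (k : ℝ)) * ∑ i ∈ Finset.range k, β * F ((φ : X → X)^[i] x)) atTop ≤ 0 ∧
      limsup (fun k : ℕ =>
          (1 / (k : ℝ)) * ∑ i ∈ Finset.range k, -(β * F ((φ.symm : X → X)^[i + 1] x))) atTop ≤ 0 := by
  obtain ⟨hprob, hcf⟩ := hconf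
  have : IsProbabilityMeasure m := hprob
  obtain ⟨C₀, hC₀⟩ := isCompact_univ.exists_bound_of_continuousOn
    ((hF.const_smul β).continuousOn (s := Set.univ))
  set C : ℝ := max C₀ 0 with hCdef
  have hC0 : 0 ≤ C := le_max_right _ _
  have hGC : ∀ x : X, |β * F x| ≤ C := by
    intro x
    have h1 : |β * F x| ≤ C₀ := by
      simpa [Real.norm_eq_abs, smul_eq_mul, abs_mul] using hC₀ x (Set.mem_univ x)
    exact h1.trans (le_max_left _ _)
  set Sf : ℕ → X → ℝ := fun k x => ∑ i ∈ Finset.range k, β * F ((φ : X → X)^[i] x) with hSf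
  set Sb : ℕ → X → ℝ :=
    fun k x => ∑ i ∈ Finset.range k, -(β * F ((φ.symm : X → X)^[i + 1] x)) with hSb
  have hSfcont : ∀ k, Continuous (Sf k) := fun k =>
    continuous_finset_sum _ fun i _ => continuous_const.mul (hF.comp (φ.continuous.iterate i))
  have hSbcont : ∀ k, Continuous (Sb k) := fun k =>
    continuous_finset_sum _ fun i _ =>
      (continuous_const.mul (hF.comp (φ.symm.continuous.iterate (i + 1)))).neg
  have hSfbd : ∀ k x, |Sf k x| ≤ k * C := by
    intro k x
    calc |Sf k x| ≤ ∑ i ∈ Finset.range k, |β * F ((φ : X → X)^[i] x)| :=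
          Finset.abs_sum_le_sum_abs _ _
      _ ≤ ∑ _i ∈ Finset.range k, C := Finset.sum_le_sum fun i _ => hGC _
      _ = k * C := by simp [mul_comm]
  have hSbbd : ∀ k x, |Sb k x| ≤ k * C := by
    intro k x
    calc |Sb k x| ≤ ∑ i ∈ Finset.range k, |-(β * F ((φ.symm : X → X)^[i+1] x))| :=
          Finset.abs_sum_le_sum_abs _ _
      _ ≤ ∑ _i ∈ Finset.range k, C := Finset.sum_le_sum fun i _ => by
          rw [abs_neg]; exact hGC _
      _ = k * C := by simp [mul_comm]
  have hSfint : ∀ k, ∫ x, Real.exp (Sf k x) ∂m = 1 := by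
    intro k
    induction k with
    | zero => simp [hSf]
    | succ n ih =>
      have hc : Continuous fun x => Real.exp (Sf n x) := Real.continuous_exp.comp (hSfcont n)
      have h2 := hcf _ hc
      rw [ih] at h2
      rw [eq_comm, h2]
      congr 1
      ext x
      rw [← Real.exp_add]
      congr 1
      simp only [hSf]
      rw [Finset.sum_range_succ']
      simp [Function.iterate_succ_apply]
  have hSbint : ∀ k, ∫ x, Real.exp (Sb k x) ∂m = 1 := by
    intro k
    induction k with
    | zero => simp [hSb]
    | succ n ih =>
      have hc : Continuous fun x => Real.exp (Sb (n+1) x) :=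
        Real.continuous_exp.comp (hSbcont (n+1))
      have h2 := hcf _ hc
      rw [h2, ← ih]
      congr 1
      ext x
      rw [← Real.exp_add]
      congr 1
      have hiter : ∀ i : ℕ,
          (φ.symm : X → X)^[i + 1] ((φ : X → X) x) = (φ.symm : X → X)^[i] x := by
        intro i
        rw [Function.iterate_succ_apply]
        simp
      simp only [hSb, hiter]
      rw [Finset.sum_range_succ']
      simp
  have hfwd := aux_limsup m Sf (fun k => (hSfcont k).measurable) C hC0 hSfbd hSfint
  have hbwd := aux_limsup m Sb (fun k => (hSbcont k).measurable) C hC0 hSbbd hSbint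
  filter_upwards [hfwd, hbwd] with x h1 h2
  exact ⟨h1, h2⟩
end

section
/- Let X be a compact metric space, φ: X → X a homeomorphism, F: X → ℝ continuous and β ∈ ℝ. Let m be an e^{βF}-conformal measure such that for m-almost every x ∈ X one has liminf_{n→∞} (1/n)·∑_{j=1}^{n} e^{β·S_j(F)(x)} > 0. Then there exist a Borel function u: X → ℝ and a φ-invariant Borel probability measure ν on X such that β·F(x) = u(φ(x)) − u(x) for m-almost all x and dν = e^{−u} dm. -/
open MeasureTheory Filter Topology
open scoped ENNReal NNReal

/-- A measure `ν` is `φ`-invariant if `ν(φ⁻¹(B)) = ν(B)` for all Borel sets `B`. -/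
def IsInvariantMeasure {X : Type*} [TopologicalSpace X] [MeasurableSpace X]
    (φ : X ≃ₜ X) (ν : Measure X) : Prop :=
  ∀ B : Set X, MeasurableSet B → ν ((φ : X → X) ⁻¹' B) = ν B

private lemma liminf_const_mul_aux {k : ℝ≥0∞} (hk0 : k ≠ 0) (hktop : k ≠ ⊤) (u : ℕ → ℝ≥0∞) :
    liminf (fun n => k * u n) atTop = k * liminf u atTop := by
  let e : ℝ≥0∞ ≃o ℝ≥0∞ :=
    { toFun := fun z => k * z
      invFun := fun z => k⁻¹ * z
      left_inv := fun z => by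
        simp only []; rw [← mul_assoc, ENNReal.inv_mul_cancel hk0 hktop, one_mul]
      right_inv := fun z => by
        simp only []; rw [← mul_assoc, ENNReal.mul_inv_cancel hk0 hktop, one_mul]
      map_rel_iff' := @fun a b => ENNReal.mul_le_mul_iff_right hk0 hktop }
  exact (OrderIso.liminf_apply e).symm

theorem stmt10 {X : Type*} [MetricSpace X] [CompactSpace X]
    [MeasurableSpace X] [BorelSpace X]
    (φ : X ≃ₜ X) (F : X → ℝ) (hF : Continuous F) (β : ℝ)
    (m : Measure X) (hm : IsConformalMeasure φ F β m)
    (hliminf : ∀ᵐ x ∂m,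
      0 < liminf (fun n : ℕ => (1 / (n : ℝ)) *
          ∑ j ∈ Finset.Icc 1 n,
            Real.exp (β * ∑ k ∈ Finset.range j, F ((φ : X → X)^[k] x))) atTop) :
    ∃ u : X → ℝ, Measurable u ∧
      ∃ ν : Measure X, IsProbabilityMeasure ν ∧ IsInvariantMeasure φ ν ∧
        (∀ᵐ x ∂m, β * F x = u (φ x) - u x) ∧
        ν = m.withDensity (fun x => ENNReal.ofReal (Real.exp (-u x))) := by
  obtain ⟨hprob, hint⟩ := hm
  haveI := hprob
  -- the conformal weight
  set e : X → ℝ≥0∞ := fun x => ENNReal.ofReal (Real.exp (β * F x)) with he_def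
  have he_meas : Measurable e :=
    ENNReal.measurable_ofReal.comp (Real.continuous_exp.comp (continuous_const.mul hF)).measurable
  have he0 : ∀ x, e x ≠ 0 := fun x => (ENNReal.ofReal_pos.2 (Real.exp_pos _)).ne'
  have hetop : ∀ x, e x ≠ ∞ := fun x => ENNReal.ofReal_ne_top
  -- integrability of continuous functions
  have hInt : ∀ g : X → ℝ, Continuous g → Integrable g m := fun g hg => by
    exact (BoundedContinuousFunction.mkOfCompact (⟨g, hg⟩ : C(X, ℝ))).integrable m
  -- the fundamental measure identity
  have hmap : m = (m.withDensity e).map φ := by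
    apply ext_of_forall_lintegral_eq_of_IsFiniteMeasure
    intro f
    rw [lintegral_map f.measurable_coe_ennreal_comp φ.continuous.measurable,
      lintegral_withDensity_eq_lintegral_mul m he_meas
        (show Measurable fun x => ((f (φ x) : ℝ≥0) : ℝ≥0∞) from
          f.measurable_coe_ennreal_comp.comp φ.continuous.measurable)]
    have hfc : Continuous fun x => (f x : ℝ) := NNReal.continuous_coe.comp f.continuous
    have int1 : Integrable (fun x => (f x : ℝ)) m := hInt _ hfc
    have int2 : Integrable (fun x => (f (φ x) : ℝ) * Real.exp (β * F x)) m :=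
      hInt _ ((hfc.comp φ.continuous).mul (Real.continuous_exp.comp (continuous_const.mul hF)))
    calc ∫⁻ x, (f x : ℝ≥0∞) ∂m
        = ∫⁻ x, ENNReal.ofReal ((f x : ℝ)) ∂m := by
          simp [ENNReal.ofReal_coe_nnreal]
      _ = ENNReal.ofReal (∫ x, (f x : ℝ) ∂m) :=
          (ofReal_integral_eq_lintegral_ofReal int1
            (Filter.Eventually.of_forall fun x => (f x).coe_nonneg)).symm
      _ = ENNReal.ofReal (∫ x, (f (φ x) : ℝ) * Real.exp (β * F x) ∂m) := by
          rw [hint _ hfc]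
      _ = ∫⁻ x, ENNReal.ofReal ((f (φ x) : ℝ) * Real.exp (β * F x)) ∂m :=
          ofReal_integral_eq_lintegral_ofReal int2
            (Filter.Eventually.of_forall fun x =>
              mul_nonneg (f (φ x)).coe_nonneg (Real.exp_pos _).le)
      _ = ∫⁻ x, (e * fun x => ((f (φ x) : ℝ≥0) : ℝ≥0∞)) x ∂m := by
          apply lintegral_congr; intro x
          simp only [Pi.mul_apply, he_def]
          rw [mul_comm ((f (φ x) : ℝ≥0) : ℝ) (Real.exp (β * F x)),
            ENNReal.ofReal_mul (Real.exp_pos _).le, ENNReal.ofReal_coe_nnreal]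
  -- conformality for all measurable ℝ≥0∞-valued functions
  have hconf : ∀ h : X → ℝ≥0∞, Measurable h → ∫⁻ x, h x ∂m = ∫⁻ x, e x * h (φ x) ∂m := by
    intro h hh
    calc ∫⁻ x, h x ∂m = ∫⁻ x, h x ∂((m.withDensity e).map φ) := by rw [← hmap]
      _ = ∫⁻ x, h (φ x) ∂(m.withDensity e) := lintegral_map hh φ.continuous.measurable
      _ = ∫⁻ x, (e * fun x => h (φ x)) x ∂m :=
          lintegral_withDensity_eq_lintegral_mul m he_meas (hh.comp φ.continuous.measurable)
      _ = ∫⁻ x, e x * h (φ x) ∂m := rfl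
  -- the exponential Birkhoff terms
  set E : ℕ → X → ℝ≥0∞ := fun j x =>
    ENNReal.ofReal (Real.exp (β * ∑ k ∈ Finset.range j, F ((φ : X → X)^[k] x))) with hE_def
  have hEmeas : ∀ j, Measurable (E j) := by
    intro j
    apply ENNReal.measurable_ofReal.comp
    apply (Real.continuous_exp.comp (continuous_const.mul ?_)).measurable
    exact continuous_finset_sum _ fun k _ => hF.comp (φ.continuous.iterate k)
  have hEtop : ∀ j x, E j x ≠ ∞ := fun j x => ENNReal.ofReal_ne_top
  have hErec : ∀ j x, E (j + 1) x = e x * E j (φ x) := by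
    intro j x
    have hsum : ∑ k ∈ Finset.range (j + 1), F ((φ : X → X)^[k] x)
        = F x + ∑ k ∈ Finset.range j, F ((φ : X → X)^[k] (φ x)) := by
      rw [Finset.sum_range_succ']
      simp [Function.iterate_succ_apply, add_comm]
    rw [hE_def]
    simp only [hsum, mul_add, Real.exp_add, ENNReal.ofReal_mul (Real.exp_pos _).le]
    rfl
  -- the averaged sums
  set g : ℕ → X → ℝ≥0∞ := fun n x => ((n : ℝ≥0∞))⁻¹ * ∑ j ∈ Finset.Icc 1 n, E j x with hg_def
  have hgmeas : ∀ n, Measurable (g n) := fun n =>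
    (Finset.measurable_sum _ fun j _ => hEmeas j).const_mul _
  have hgr : ∀ n x, g n x = ((n : ℝ≥0∞))⁻¹ * ∑ i ∈ Finset.range n, E (1 + i) x := by
    intro n x
    rw [hg_def]
    simp only []
    rw [← Finset.Ico_add_one_right_eq_Icc, Finset.sum_Ico_eq_sum_range]
    simp
  -- lintegrals of E and g
  have hEl : ∀ j, ∫⁻ x, E j x ∂m = 1 := by
    intro j
    induction j with
    | zero => simp [hE_def]
    | succ j ih =>
      calc ∫⁻ x, E (j + 1) x ∂m = ∫⁻ x, e x * E j (φ x) ∂m :=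
            lintegral_congr fun x => hErec j x
        _ = ∫⁻ x, E j x ∂m := (hconf (E j) (hEmeas j)).symm
        _ = 1 := ih
  have hgl : ∀ n : ℕ, 1 ≤ n → ∫⁻ x, g n x ∂m = 1 := by
    intro n hn
    have hn0 : ((n : ℝ≥0∞)) ≠ 0 := Nat.cast_ne_zero.mpr (by omega)
    rw [hg_def]
    simp only []
    rw [lintegral_const_mul _ (Finset.measurable_sum _ fun j _ => hEmeas j),
      lintegral_finset_sum _ fun j _ => hEmeas j]
    simp only [hEl]
    simp [Nat.card_Icc, ENNReal.inv_mul_cancel hn0 (ENNReal.natCast_ne_top n)]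
  -- the liminf function G
  set G : X → ℝ≥0∞ := fun x => liminf (fun n => g n x) atTop with hG_def
  have hGmeas : Measurable G := Measurable.liminf hgmeas
  have hGint : ∫⁻ x, G x ∂m ≤ 1 := by
    refine le_trans (lintegral_liminf_le hgmeas) ?_
    apply liminf_le_of_frequently_le'
    exact ((eventually_ge_atTop 1).mono fun n hn => (hgl n hn).le).frequently
  have hGtop : ∀ᵐ x ∂m, G x < ∞ :=
    ae_lt_top hGmeas (hGint.trans_lt ENNReal.one_lt_top).ne
  -- G is positive a.e.
  have hGpos : ∀ᵐ x ∂m, 0 < G x := by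
    filter_upwards [hliminf] with x hx
    obtain ⟨c, hc0, hclt⟩ := exists_between hx
    have hbdd : IsBoundedUnder (· ≥ ·) atTop (fun n : ℕ => (1 / (n : ℝ)) *
        ∑ j ∈ Finset.Icc 1 n, Real.exp (β * ∑ k ∈ Finset.range j, F ((φ : X → X)^[k] x))) :=
      Filter.isBoundedUnder_of ⟨0, fun n =>
        mul_nonneg (by positivity) (Finset.sum_nonneg fun j _ => (Real.exp_pos _).le)⟩
    have hev := eventually_lt_of_lt_liminf hclt hbdd
    have hkey : ∀ᶠ n in atTop, ENNReal.ofReal c ≤ g n x := by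
      filter_upwards [hev, eventually_ge_atTop 1] with n hn hn1
      have hofReal : ENNReal.ofReal ((1 / (n : ℝ)) *
          ∑ j ∈ Finset.Icc 1 n, Real.exp (β * ∑ k ∈ Finset.range j, F ((φ : X → X)^[k] x)))
          = g n x := by
        rw [ENNReal.ofReal_mul (by positivity), ENNReal.ofReal_sum_of_nonneg
          (fun j _ => (Real.exp_pos _).le)]
        rw [hg_def]
        congr 1
        rw [one_div, ENNReal.ofReal_inv_of_pos (by exact_mod_cast hn1 : (0:ℝ) < n),
          ENNReal.ofReal_natCast]
      rw [← hofReal]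
      exact ENNReal.ofReal_le_ofReal hn.le
    calc (0 : ℝ≥0∞) < ENNReal.ofReal c := ENNReal.ofReal_pos.2 hc0
      _ ≤ G x := le_liminf_of_le (by isBoundedDefault) hkey
  -- the key cocycle identity, valid everywhere
  have hkey : ∀ x, G x = e x * G (φ x) := by
    intro x
    have hGx : G x = liminf (fun n => g (n + 1) x) atTop :=
      (liminf_nat_add (fun n => g n x) 1).symm
    have hstep : ∀ n : ℕ, 1 ≤ n → g (n + 1) x
        = (((n : ℝ≥0∞)) + 1)⁻¹ * ((n : ℝ≥0∞) * (e x * g n (φ x)))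
          + (((n : ℝ≥0∞)) + 1)⁻¹ * E 1 x := by
      intro n hn
      have hn0 : ((n : ℝ≥0∞)) ≠ 0 := Nat.cast_ne_zero.mpr (by omega)
      have hSn : (∑ i ∈ Finset.range n, E (1 + i) (φ x)) = (n : ℝ≥0∞) * g n (φ x) := by
        rw [hgr n (φ x), ← mul_assoc, ENNReal.mul_inv_cancel hn0 (ENNReal.natCast_ne_top n),
          one_mul]
      have hrec : (∑ i ∈ Finset.range (n + 1), E (1 + i) x)
          = e x * ∑ i ∈ Finset.range n, E (1 + i) (φ x) + E 1 x := by
        rw [Finset.sum_range_succ']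
        congr 1
        rw [Finset.mul_sum]
        exact Finset.sum_congr rfl fun i _ => hErec (1 + i) x
      rw [hgr (n + 1) x, hrec, hSn]
      push_cast
      ring
    have hcast : ∀ n : ℕ, (((n : ℝ≥0∞)) + 1) ≠ 0 := fun n => by simp
    have hcast' : ∀ n : ℕ, (((n : ℝ≥0∞)) + 1) ≠ ∞ := fun n => by
      simp [ENNReal.natCast_ne_top]
    have hlim_a : liminf (fun n => e x * g n (φ x)) atTop = e x * G (φ x) :=
      liminf_const_mul_aux (he0 x) (hetop x) _
    -- eventual upper bound
    have hub : ∀ᶠ n in atTop,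
        g (n + 1) x ≤ e x * g n (φ x) + (((n : ℝ≥0∞)) + 1)⁻¹ * E 1 x := by
      filter_upwards [eventually_ge_atTop 1] with n hn
      rw [hstep n hn]
      have h1 : (((n : ℝ≥0∞)) + 1)⁻¹ * (n : ℝ≥0∞) ≤ 1 :=
        calc (((n : ℝ≥0∞)) + 1)⁻¹ * (n : ℝ≥0∞)
            ≤ (((n : ℝ≥0∞)) + 1)⁻¹ * (((n : ℝ≥0∞)) + 1) := mul_le_mul_right le_self_add _
          _ = 1 := ENNReal.inv_mul_cancel (hcast n) (hcast' n)
      refine add_le_add_left ?_ _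
      calc (((n : ℝ≥0∞)) + 1)⁻¹ * ((n : ℝ≥0∞) * (e x * g n (φ x)))
          = ((((n : ℝ≥0∞)) + 1)⁻¹ * (n : ℝ≥0∞)) * (e x * g n (φ x)) := by ring
        _ ≤ 1 * (e x * g n (φ x)) := mul_le_mul_left h1 _
        _ = e x * g n (φ x) := one_mul _
    -- the tail term tends to zero
    have htail : Tendsto (fun n : ℕ => (((n : ℝ≥0∞)) + 1)⁻¹ * E 1 x) atTop (𝓝 0) := by
      have h1 : Tendsto (fun n : ℕ => (((n : ℝ≥0∞)) + 1)⁻¹) atTop (𝓝 0) := by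
        have h := ENNReal.tendsto_inv_nat_nhds_zero.comp (tendsto_add_atTop_nat 1)
        simpa [Function.comp_def] using h
      simpa using ENNReal.Tendsto.mul_const h1 (Or.inr (hEtop 1 x))
    -- upper inequality
    have hupper : G x ≤ e x * G (φ x) := by
      rcases eq_or_ne (e x * G (φ x)) ∞ with htop | htop
      · simp [htop]
      rw [hGx]
      refine ENNReal.le_of_forall_pos_le_add fun ε hε _ => ?_
      have hhalf : (0 : ℝ≥0∞) < (ε : ℝ≥0∞) / 2 := by
        simp [ENNReal.div_pos_iff, hε.ne']
      have hfr : ∃ᶠ n in atTop, e x * g n (φ x) < e x * G (φ x) + (ε : ℝ≥0∞) / 2 := by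
        apply frequently_lt_of_liminf_lt (by isBoundedDefault)
        rw [hlim_a]
        exact ENNReal.lt_add_right htop hhalf.ne'
      have hev0 : ∀ᶠ n : ℕ in atTop, (((n : ℝ≥0∞)) + 1)⁻¹ * E 1 x ≤ (ε : ℝ≥0∞) / 2 :=
        (htail.eventually (gt_mem_nhds hhalf)).mono fun n hn => hn.le
      apply liminf_le_of_frequently_le'
      refine (hfr.and_eventually (hev0.and hub)).mono ?_
      rintro n ⟨h1, h2, h3⟩
      calc g (n + 1) x ≤ e x * g n (φ x) + (((n : ℝ≥0∞)) + 1)⁻¹ * E 1 x := h3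
        _ ≤ (e x * G (φ x) + (ε : ℝ≥0∞) / 2) + (ε : ℝ≥0∞) / 2 := add_le_add h1.le h2
        _ = e x * G (φ x) + (ε : ℝ≥0∞) := by rw [add_assoc, ENNReal.add_halves]
    -- lower inequality
    have hlower : e x * G (φ x) ≤ G x := by
      apply ENNReal.le_of_forall_lt_one_mul_le
      intro c hc
      rcases eq_or_ne c 0 with rfl | hc0
      · simp
      have hctop : c ≠ ∞ := ne_top_of_lt hc
      have h1c : (0 : ℝ≥0∞) < 1 - c := tsub_pos_iff_lt.mpr hc
      have hev : ∀ᶠ n : ℕ in atTop, (((n : ℝ≥0∞)) + 1)⁻¹ ≤ 1 - c := by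
        have h1 : Tendsto (fun n : ℕ => (((n : ℝ≥0∞)) + 1)⁻¹) atTop (𝓝 0) := by
          have h := ENNReal.tendsto_inv_nat_nhds_zero.comp (tendsto_add_atTop_nat 1)
          simpa [Function.comp_def] using h
        exact (h1.eventually (gt_mem_nhds h1c)).mono fun n hn => hn.le
      have hlb : ∀ᶠ n in atTop, c * (e x * g n (φ x)) ≤ g (n + 1) x := by
        filter_upwards [hev, eventually_ge_atTop 1] with n hn hn1
        have hcn : c ≤ (((n : ℝ≥0∞)) + 1)⁻¹ * (n : ℝ≥0∞) := by
          have hle1 : c + (((n : ℝ≥0∞)) + 1)⁻¹ ≤ 1 := by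
            calc c + (((n : ℝ≥0∞)) + 1)⁻¹ ≤ c + (1 - c) := add_le_add_right hn _
              _ = 1 := add_tsub_cancel_of_le hc.le
          have hge1 : (1 : ℝ≥0∞) = (((n : ℝ≥0∞)) + 1)⁻¹ * (n : ℝ≥0∞)
              + (((n : ℝ≥0∞)) + 1)⁻¹ := by
            have hm1 : (((n : ℝ≥0∞)) + 1)⁻¹ * (((n : ℝ≥0∞)) + 1) = 1 :=
              ENNReal.inv_mul_cancel (hcast n) (hcast' n)
            calc (1 : ℝ≥0∞) = (((n : ℝ≥0∞)) + 1)⁻¹ * (((n : ℝ≥0∞)) + 1) := hm1.symm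
              _ = (((n : ℝ≥0∞)) + 1)⁻¹ * (n : ℝ≥0∞) + (((n : ℝ≥0∞)) + 1)⁻¹ := by ring
          have := le_trans hle1 hge1.le
          exact (ENNReal.add_le_add_iff_right (by simp [ENNReal.natCast_ne_top])).mp this
        rw [hstep n hn1]
        calc c * (e x * g n (φ x))
            ≤ ((((n : ℝ≥0∞)) + 1)⁻¹ * (n : ℝ≥0∞)) * (e x * g n (φ x)) :=
              mul_le_mul_left hcn _
          _ = (((n : ℝ≥0∞)) + 1)⁻¹ * ((n : ℝ≥0∞) * (e x * g n (φ x))) := by ring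
          _ ≤ _ := le_self_add
      calc c * (e x * G (φ x))
          = liminf (fun n => c * (e x * g n (φ x))) atTop := by
            rw [liminf_const_mul_aux hc0 hctop, hlim_a]
        _ ≤ liminf (fun n => g (n + 1) x) atTop := liminf_le_liminf hlb
        _ = G x := hGx.symm
    exact le_antisymm hupper hlower
  -- the normalizing constant
  set cst : ℝ≥0∞ := ∫⁻ x, G x ∂m with hcst_def
  have hcst_top : cst ≠ ∞ := (hGint.trans_lt ENNReal.one_lt_top).ne
  have hcst0 : cst ≠ 0 := by
    rw [hcst_def]
    rw [← pos_iff_ne_zero, lintegral_pos_iff_support hGmeas, pos_iff_ne_zero]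
    intro h0
    have h1 : ∀ᵐ x ∂m, x ∉ Function.support G := measure_eq_zero_iff_ae_notMem.mp h0
    have hFalse : ∀ᵐ _x ∂m, False := by
      filter_upwards [h1, hGpos] with x h1x h2x
      exact h1x h2x.ne'
    have : m Set.univ = 0 := by
      have := hFalse
      rw [ae_iff] at this
      simp at this
    simp [measure_univ] at this
  -- the transfer function u
  set u : X → ℝ := fun x => Real.log cst.toReal - Real.log (G x).toReal with hu_def
  have hu_meas : Measurable u :=
    measurable_const.sub (Real.measurable_log.comp hGmeas.ennreal_toReal)
  have hdens : (fun x => ENNReal.ofReal (Real.exp (-u x))) =ᵐ[m] fun x => G x * cst⁻¹ := by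
    filter_upwards [hGpos, hGtop] with x h0 htop
    have hGr : 0 < (G x).toReal := ENNReal.toReal_pos h0.ne' htop.ne
    have hcr : 0 < cst.toReal := ENNReal.toReal_pos hcst0 hcst_top
    have hexp : Real.exp (-u x) = (G x).toReal / cst.toReal := by
      rw [hu_def]
      simp only [neg_sub]
      rw [Real.exp_sub, Real.exp_log hGr, Real.exp_log hcr]
    rw [hexp, ENNReal.ofReal_div_of_pos hcr, ENNReal.ofReal_toReal htop.ne,
      ENNReal.ofReal_toReal hcst_top, div_eq_mul_inv]
  have hν_eq : m.withDensity (fun x => ENNReal.ofReal (Real.exp (-u x)))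
      = m.withDensity (fun x => G x * cst⁻¹) := withDensity_congr_ae hdens
  have hDmeas : Measurable fun x => G x * cst⁻¹ := hGmeas.mul_const _
  refine ⟨u, hu_meas, m.withDensity (fun x => ENNReal.ofReal (Real.exp (-u x))), ?_, ?_, ?_, rfl⟩
  · -- probability measure
    constructor
    rw [hν_eq, withDensity_apply _ MeasurableSet.univ, Measure.restrict_univ,
      lintegral_mul_const _ hGmeas, ← hcst_def, ENNReal.mul_inv_cancel hcst0 hcst_top]
  · -- invariance
    intro B hB
    have hpre : MeasurableSet ((φ : X → X) ⁻¹' B) := hB.preimage φ.continuous.measurable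
    rw [hν_eq, withDensity_apply _ hpre, withDensity_apply _ hB]
    calc ∫⁻ x in (φ : X → X) ⁻¹' B, G x * cst⁻¹ ∂m
        = ∫⁻ x, ((φ : X → X) ⁻¹' B).indicator (fun x => G x * cst⁻¹) x ∂m :=
          (lintegral_indicator hpre _).symm
      _ = ∫⁻ x, e x * (B.indicator (fun y => G y * cst⁻¹) (φ x)) ∂m := by
          apply lintegral_congr
          intro x
          by_cases h : φ x ∈ B
          · rw [Set.indicator_of_mem (Set.mem_preimage.mpr h) (fun x => G x * cst⁻¹),
              Set.indicator_of_mem h, hkey x]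
            ring
          · rw [Set.indicator_of_notMem (fun hx => h (Set.mem_preimage.mp hx)),
              Set.indicator_of_notMem h, mul_zero]
      _ = ∫⁻ y, B.indicator (fun y => G y * cst⁻¹) y ∂m :=
          (hconf _ (hDmeas.indicator hB)).symm
      _ = ∫⁻ x in B, G x * cst⁻¹ ∂m := lintegral_indicator hB _
  · -- the coboundary equation
    filter_upwards [hGpos, hGtop] with x h0 htop
    have hphi0 : G (φ x) ≠ 0 := by
      intro h
      rw [hkey x, h, mul_zero] at h0
      exact lt_irrefl _ h0
    have hphitop : G (φ x) ≠ ∞ := by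
      intro h
      rw [hkey x, h, ENNReal.mul_top (he0 x)] at htop
      exact lt_irrefl _ htop
    have hGr : 0 < (G x).toReal := ENNReal.toReal_pos h0.ne' htop.ne
    have hGr' : 0 < (G (φ x)).toReal := ENNReal.toReal_pos hphi0 hphitop
    have htoReal : (G x).toReal = Real.exp (β * F x) * (G (φ x)).toReal := by
      rw [hkey x, ENNReal.toReal_mul, he_def]
      simp [ENNReal.toReal_ofReal (Real.exp_pos _).le]
    have hlog : Real.log (G x).toReal = β * F x + Real.log (G (φ x)).toReal := by
      rw [htoReal, Real.log_mul (Real.exp_pos _).ne' hGr'.ne', Real.log_exp]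
    rw [hu_def]
    simp only []
    rw [hlog]
    ring
end

section
/- Let X be a compact metric space, φ: X → X a homeomorphism, H: X → ℝ a continuous function, and set F = H ∘ φ − H. For every β ∈ ℝ, the map sending a φ-invariant Borel probability measure λ to the measure (∫_X e^{βH} dλ)^{-1}·e^{βH} dλ is a homeomorphism (with respect to the weak* topologies) from the set of φ-invariant Borel probability measures on X onto the set of e^{βF}-conformal measures for φ. -/
open MeasureTheory Filter Topology
open scoped NNReal ENNReal

section Aux

variable {X : Type*} [MetricSpace X] [CompactSpace X] [MeasurableSpace X] [BorelSpace X]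

lemma cont_integrable (μ : Measure X) [IsFiniteMeasure μ] {f : X → ℝ} (hf : Continuous f) :
    Integrable f μ := by
  exact (BoundedContinuousFunction.mkOfCompact ⟨f, hf⟩).integrable μ

lemma nonempty_of_prob (μ : ProbabilityMeasure X) : Nonempty X := by
  by_contra h
  rw [not_nonempty_iff] at h
  have h1 : (μ : Measure X) Set.univ = 1 := measure_univ
  rw [Set.univ_eq_empty_iff.mpr h, measure_empty] at h1
  simp at h1

lemma integral_pos_of (μ : ProbabilityMeasure X) {ρ : X → ℝ} (hρ : Continuous ρ)
    (hpos : ∀ x, 0 < ρ x) : 0 < ∫ x, ρ x ∂(μ : Measure X) := by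
  haveI := nonempty_of_prob μ
  obtain ⟨x0, -, hx0⟩ := isCompact_univ.exists_isMinOn Set.univ_nonempty hρ.continuousOn
  calc (0:ℝ) < ρ x0 := hpos x0
    _ = ∫ _, ρ x0 ∂(μ : Measure X) := by simp
    _ ≤ ∫ x, ρ x ∂(μ : Measure X) :=
      integral_mono (integrable_const _) (cont_integrable _ hρ) fun x => hx0 (Set.mem_univ x)

noncomputable def densMap (ρ : X → ℝ) (μ : ProbabilityMeasure X) : Measure X :=
  (ENNReal.ofReal (∫ x, ρ x ∂(μ : Measure X)))⁻¹ •
    (μ : Measure X).withDensity (fun x => ENNReal.ofReal (ρ x))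

lemma integral_densMap {ρ : X → ℝ} (hρ : Continuous ρ) (hpos : ∀ x, 0 < ρ x)
    (μ : ProbabilityMeasure X) {f : X → ℝ} (hf : Continuous f) :
    ∫ x, f x ∂(densMap ρ μ) =
      (∫ x, ρ x ∂(μ : Measure X))⁻¹ * ∫ x, ρ x * f x ∂(μ : Measure X) := by
  have hden : (fun x => ENNReal.ofReal (ρ x)) =
      fun x => ((Real.toNNReal (ρ x) : ℝ≥0) : ℝ≥0∞) := rfl
  rw [densMap, integral_smul_measure, hden,
    integral_withDensity_eq_integral_smul
    (show Measurable fun x => Real.toNNReal (ρ x) from measurable_real_toNNReal.comp hρ.measurable) f]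
  have h1 : ∀ x, (Real.toNNReal (ρ x)) • f x = ρ x * f x := by
    intro x
    rw [NNReal.smul_def, Real.coe_toNNReal _ (hpos x).le, smul_eq_mul]
  simp_rw [h1]
  rw [ENNReal.toReal_inv, ENNReal.toReal_ofReal (integral_nonneg fun x => (hpos x).le),
    smul_eq_mul]

lemma isProb_densMap {ρ : X → ℝ} (hρ : Continuous ρ) (hpos : ∀ x, 0 < ρ x)
    (μ : ProbabilityMeasure X) : IsProbabilityMeasure (densMap ρ μ) := by
  constructor
  have hl : ∫⁻ x, ENNReal.ofReal (ρ x) ∂(μ : Measure X)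
      = ENNReal.ofReal (∫ x, ρ x ∂(μ : Measure X)) :=
    (ofReal_integral_eq_lintegral_ofReal (cont_integrable _ hρ)
      (ae_of_all _ fun x => (hpos x).le)).symm
  rw [densMap, Measure.smul_apply, smul_eq_mul,
    withDensity_apply _ MeasurableSet.univ, setLIntegral_univ, hl]
  exact ENNReal.inv_mul_cancel
    (ENNReal.ofReal_pos.mpr (integral_pos_of μ hρ hpos)).ne' ENNReal.ofReal_ne_top

noncomputable def probDensMap (ρ : X → ℝ) (hρ : Continuous ρ) (hpos : ∀ x, 0 < ρ x)
    (μ : ProbabilityMeasure X) : ProbabilityMeasure X :=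
  ⟨densMap ρ μ, isProb_densMap hρ hpos μ⟩

lemma coe_probDensMap (ρ : X → ℝ) (hρ : Continuous ρ) (hpos : ∀ x, 0 < ρ x)
    (μ : ProbabilityMeasure X) : (probDensMap ρ hρ hpos μ : Measure X) = densMap ρ μ := rfl

lemma prob_ext {μ ν : Measure X} [IsProbabilityMeasure μ] [IsProbabilityMeasure ν]
    (h : ∀ f : X → ℝ, Continuous f → ∫ x, f x ∂μ = ∫ x, f x ∂ν) : μ = ν := by
  apply ext_of_forall_lintegral_eq_of_IsFiniteMeasure
  intro f
  have hc : Continuous fun x => ((f x : ℝ)) := NNReal.continuous_coe.comp f.continuous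
  rw [lintegral_coe_eq_integral _ (cont_integrable _ hc),
    lintegral_coe_eq_integral _ (cont_integrable _ hc), h _ hc]

lemma map_of_invariant {φ : X ≃ₜ X} {μ : Measure X} (h : IsInvariantMeasure φ μ) :
    Measure.map φ μ = μ := by
  ext B hB
  rw [Measure.map_apply φ.continuous.measurable hB]
  exact h B hB

lemma integral_comp_of_invariant {φ : X ≃ₜ X} {μ : Measure X} (h : Measure.map φ μ = μ)
    {f : X → ℝ} (hf : Continuous f) : ∫ x, f (φ x) ∂μ = ∫ x, f x ∂μ := by
  conv_rhs => rw [← h]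
  rw [integral_map φ.continuous.measurable.aemeasurable hf.aestronglyMeasurable]

lemma probDensMap_probDensMap {ρ σ : X → ℝ} (hρ : Continuous ρ) (hσ : Continuous σ)
    (hρpos : ∀ x, 0 < ρ x) (hσpos : ∀ x, 0 < σ x) (hmul : ∀ x, ρ x * σ x = 1)
    (μ : ProbabilityMeasure X) :
    probDensMap σ hσ hσpos (probDensMap ρ hρ hρpos μ) = μ := by
  apply ProbabilityMeasure.toMeasure_injective
  apply prob_ext
  intro f hf
  simp only [coe_probDensMap]
  rw [integral_densMap hσ hσpos _ hf]
  simp only [coe_probDensMap]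
  rw [integral_densMap hρ hρpos _ (show Continuous fun x => σ x * f x from hσ.mul hf), integral_densMap hρ hρpos _ hσ]
  have h1 : ∫ x, ρ x * σ x ∂(μ : Measure X) = 1 := by
    simp_rw [hmul]; simp
  have h2 : ∫ x, ρ x * (σ x * f x) ∂(μ : Measure X) = ∫ x, f x ∂(μ : Measure X) := by
    simp_rw [← mul_assoc, hmul, one_mul]
  rw [h1, h2]
  have hc := integral_pos_of μ hρ hρpos
  field_simp

lemma continuous_probDensMap {ρ : X → ℝ} (hρ : Continuous ρ) (hpos : ∀ x, 0 < ρ x) :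
    Continuous (probDensMap ρ hρ hpos) := by
  rw [continuous_iff_continuousAt]
  intro μ0
  unfold ContinuousAt
  rw [ProbabilityMeasure.tendsto_iff_forall_integral_tendsto]
  intro f
  have key : ∀ μ : ProbabilityMeasure X, ∫ x, (f : X → ℝ) x ∂(probDensMap ρ hρ hpos μ : Measure X)
      = (∫ x, ρ x ∂(μ : Measure X))⁻¹ * ∫ x, ρ x * f x ∂(μ : Measure X) :=
    fun μ => integral_densMap hρ hpos μ f.continuous
  simp_rw [key]
  have hρb : Continuous fun μ : ProbabilityMeasure X => ∫ x, ρ x ∂(μ : Measure X) := by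
    have := ProbabilityMeasure.continuous_integral_boundedContinuousFunction (X := X)
      (BoundedContinuousFunction.mkOfCompact ⟨ρ, hρ⟩)
    simpa using this
  have hρfb : Continuous fun μ : ProbabilityMeasure X => ∫ x, ρ x * f x ∂(μ : Measure X) := by
    have := ProbabilityMeasure.continuous_integral_boundedContinuousFunction (X := X)
      (BoundedContinuousFunction.mkOfCompact ⟨fun x => ρ x * f x, hρ.mul f.continuous⟩)
    simpa using this
  exact ((hρb.tendsto μ0).inv₀ (integral_pos_of μ0 hρ hpos).ne').mul (hρfb.tendsto μ0)

lemma gcont {H : X → ℝ} (hH : Continuous H) (β : ℝ) :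
    Continuous fun x => Real.exp (β * H x) :=
  Real.continuous_exp.comp (continuous_const.mul hH)

lemma gcont' {H : X → ℝ} (hH : Continuous H) (β : ℝ) :
    Continuous fun x => Real.exp (-(β * H x)) :=
  Real.continuous_exp.comp (continuous_const.mul hH).neg

lemma conf_of_inv (φ : X ≃ₜ X) {H : X → ℝ} (hH : Continuous H) (β : ℝ)
    (μ : ProbabilityMeasure X) (hμ : IsInvariantMeasure φ (μ : Measure X)) :
    IsConformalMeasure φ (fun x => H (φ x) - H x) β
      ((probDensMap (fun x => Real.exp (β * H x)) (gcont hH β)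
        (fun x => Real.exp_pos _) μ : ProbabilityMeasure X) : Measure X) := by
  refine ⟨(probDensMap _ (gcont hH β) (fun x => Real.exp_pos _) μ).2, ?_⟩
  intro f hf
  have hmap := map_of_invariant hμ
  simp only [coe_probDensMap]
  have hrhs : Continuous fun x => f (φ x) * Real.exp (β * (H (φ x) - H x)) :=
    (hf.comp φ.continuous).mul
      (Real.continuous_exp.comp (continuous_const.mul ((hH.comp φ.continuous).sub hH)))
  rw [integral_densMap (gcont hH β) (fun x => Real.exp_pos _) _ hf,
    integral_densMap (gcont hH β) (fun x => Real.exp_pos _) _ hrhs]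
  congr 1
  have hpt : (fun x => Real.exp (β * H x) * (f (φ x) * Real.exp (β * (H (φ x) - H x))))
      = fun x => Real.exp (β * H (φ x)) * f (φ x) := by
    funext x
    rw [mul_sub, Real.exp_sub]
    field_simp
  rw [hpt]
  exact (integral_comp_of_invariant hmap ((gcont hH β).mul hf)).symm

lemma inv_of_conf (φ : X ≃ₜ X) {H : X → ℝ} (hH : Continuous H) (β : ℝ)
    (m : ProbabilityMeasure X)
    (hm : IsConformalMeasure φ (fun x => H (φ x) - H x) β (m : Measure X)) :
    IsInvariantMeasure φ
      ((probDensMap (fun x => Real.exp (-(β * H x))) (gcont' hH β)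
        (fun x => Real.exp_pos _) m : ProbabilityMeasure X) : Measure X) := by
  set ν := probDensMap (fun x => Real.exp (-(β * H x))) (gcont' hH β)
    (fun x => Real.exp_pos _) m with hν
  have key : Measure.map φ (ν : Measure X) = (ν : Measure X) := by
    haveI : IsProbabilityMeasure (Measure.map φ (ν : Measure X)) :=
      Measure.isProbabilityMeasure_map φ.continuous.measurable.aemeasurable
    apply prob_ext
    intro f hf
    rw [integral_map φ.continuous.measurable.aemeasurable hf.aestronglyMeasurable]
    rw [hν, coe_probDensMap,
      integral_densMap (gcont' hH β) (fun x => Real.exp_pos _) _ (show Continuous fun x => f (φ x) from hf.comp φ.continuous),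
      integral_densMap (gcont' hH β) (fun x => Real.exp_pos _) _ hf]
    congr 1
    have h2 := hm.2 (fun x => Real.exp (-(β * H x)) * f x) ((gcont' hH β).mul hf)
    have hpt : (fun x => Real.exp (-(β * H (φ x))) * f (φ x) * Real.exp (β * (H (φ x) - H x)))
        = fun x => Real.exp (-(β * H x)) * f (φ x) := by
      funext x
      rw [mul_sub, Real.exp_sub, Real.exp_neg, Real.exp_neg]
      field_simp
    simp only [] at h2
    rw [hpt] at h2
    exact h2.symm
  intro B hB
  rw [← Measure.map_apply φ.continuous.measurable hB, key]

end Aux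

theorem stmt16 {X : Type*} [MetricSpace X] [CompactSpace X]
    [MeasurableSpace X] [BorelSpace X]
    (φ : X ≃ₜ X) (H : X → ℝ) (hH : Continuous H) (β : ℝ) :
    ∃ Φ : {μ : ProbabilityMeasure X // IsInvariantMeasure φ (μ : Measure X)} ≃ₜ
        {m : ProbabilityMeasure X //
          IsConformalMeasure φ (fun x => H (φ x) - H x) β (m : Measure X)},
      ∀ μ : {μ : ProbabilityMeasure X // IsInvariantMeasure φ (μ : Measure X)},
        ((Φ μ).1 : Measure X) =
          (ENNReal.ofReal (∫ x, Real.exp (β * H x) ∂(μ.1 : Measure X)))⁻¹ •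
            (μ.1 : Measure X).withDensity (fun x => ENNReal.ofReal (Real.exp (β * H x))) := by
  have hmul : ∀ x : X, Real.exp (β * H x) * Real.exp (-(β * H x)) = 1 := fun x => by
    rw [Real.exp_neg]; exact mul_inv_cancel₀ (Real.exp_ne_zero _)
  have hmul' : ∀ x : X, Real.exp (-(β * H x)) * Real.exp (β * H x) = 1 := fun x => by
    rw [Real.exp_neg]; exact inv_mul_cancel₀ (Real.exp_ne_zero _)
  refine ⟨Homeomorph.mk (Equiv.mk
    (fun μp => ⟨probDensMap (fun x => Real.exp (β * H x)) (gcont hH β)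
        (fun x => Real.exp_pos _) μp.1, conf_of_inv φ hH β μp.1 μp.2⟩)
    (fun mp => ⟨probDensMap (fun x => Real.exp (-(β * H x))) (gcont' hH β)
        (fun x => Real.exp_pos _) mp.1, inv_of_conf φ hH β mp.1 mp.2⟩)
    ?_ ?_) ?_ ?_, fun μ => rfl⟩
  · intro μp
    apply Subtype.ext
    exact probDensMap_probDensMap (gcont hH β) (gcont' hH β)
      (fun x => Real.exp_pos _) (fun x => Real.exp_pos _) hmul μp.1
  · intro mp
    apply Subtype.ext
    exact probDensMap_probDensMap (gcont' hH β) (gcont hH β)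
      (fun x => Real.exp_pos _) (fun x => Real.exp_pos _) hmul' mp.1
  · exact ((continuous_probDensMap (gcont hH β) fun x => Real.exp_pos _).comp
      continuous_subtype_val).subtype_mk _
  · exact ((continuous_probDensMap (gcont' hH β) fun x => Real.exp_pos _).comp
      continuous_subtype_val).subtype_mk _
end
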